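/- Let G be a pertinent group and H a normal 2-subgroup of G of order 2^m. Then m is even. -/

import Mathlib

/-!
A Sylow `3`-subgroup `P` of a pertinent group `G` centralizes none of the three involutions:
if it centralized `t`, the size `3` of the conjugacy class of `t` would divide `|G : P|`.
Hence `P` fixes no element of order `2` of the normal `2`-subgroup `H`, so its fixed-point
subgroup in `H`, being a `2`-group, is trivial, and counting orbits gives
`2 ^ m = |H| ≡ 1 [MOD 3]`, forcing `m` to be even.
-/

/-- A finite group is *pertinent* if it has exactly three involutions and
they are pairwise conjugate. -/
def Pertinent (G : Type*) [Group G] : Prop :=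
  Finite G ∧ {g : G | orderOf g = 2}.ncard = 3 ∧
    ∀ a b : G, orderOf a = 2 → orderOf b = 2 → IsConj a b

open MulAction

theorem IsConj.orderOf_eq {G : Type*} [Group G] {a b : G} (h : IsConj a b) :
    orderOf a = orderOf b := by
  obtain ⟨c, rfl⟩ := isConj_iff.mp h
  simpa using ((MulAut.conj c).orderOf_eq a).symm

theorem Sylow.not_le_stabilizer_of_dvd_card_orbit {G α : Type*} [Group G] [Finite G]
    [MulAction G α] {p : ℕ} [Fact p.Prime] (P : Sylow p G) {x : α}
    (h : p ∣ Nat.card (orbit G x)) : ¬ (P : Subgroup G) ≤ stabilizer G x := fun hle =>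
  P.not_dvd_index <| h.trans <| by
    rw [Nat.card_coe_set_eq, ← index_stabilizer]
    exact Subgroup.index_dvd_of_le hle

theorem IsPGroup.card_modEq_one_of_forall_exists_smul_ne {p q : ℕ} [Fact p.Prime]
    [Fact q.Prime] {P H : Type*} [Group P] [Group H] [Finite H] [MulDistribMulAction P H]
    (hP : IsPGroup p P) (hH : IsPGroup q H)
    (hmoves : ∀ h : H, orderOf h = q → ∃ g : P, g • h ≠ h) : Nat.card H ≡ 1 [MOD p] := by
  have hbot : FixedPoints.subgroup P H = ⊥ := by
    by_contra hne
    obtain ⟨n, hn⟩ := (hH.to_subgroup (FixedPoints.subgroup P H)).exists_card_eq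
    have hn0 : n ≠ 0 := by
      rintro rfl
      exact hne (Subgroup.eq_bot_of_card_eq _ (by simpa using hn))
    obtain ⟨h, hh⟩ := exists_prime_orderOf_dvd_card' q (hn ▸ dvd_pow_self q hn0)
    obtain ⟨g, hg⟩ := hmoves h (by rwa [Subgroup.orderOf_coe])
    exact hg (h.2 g)
  calc Nat.card H ≡ Nat.card (fixedPoints P H) [MOD p] := hP.card_modEq_card_fixedPoints H
    _ = Nat.card (FixedPoints.subgroup P H) := rfl
    _ = 1 := by rw [hbot, Subgroup.card_bot]

theorem Nat.even_of_two_pow_modEq_one {m : ℕ} (h : 2 ^ m ≡ 1 [MOD 3]) : Even m := by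
  rcases Nat.even_or_odd' m with ⟨k, rfl | rfl⟩
  · exact even_two_mul k
  · simp [Nat.ModEq, pow_succ, pow_mul, Nat.mul_mod, Nat.pow_mod] at h

namespace Pertinent

variable {G : Type*} [Group G]

theorem card_orbit_conjAct (hG : Pertinent G) {t : G} (ht : orderOf t = 2) :
    Nat.card (orbit (ConjAct G) t) = 3 := by
  obtain ⟨-, hcard, hconj⟩ := hG
  have horbit : orbit (ConjAct G) t = {g : G | orderOf g = 2} := by
    ext g
    rw [ConjAct.mem_orbit_conjAct]
    exact ⟨fun hgt => hgt.orderOf_eq.trans ht, fun hg => hconj g t hg ht⟩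
  rw [horbit, Nat.card_coe_set_eq, hcard]

theorem exists_smul_ne_of_orderOf_eq_two (hG : Pertinent G) [Fact (Nat.Prime 3)]
    (P : Sylow 3 (ConjAct G)) {t : G} (ht : orderOf t = 2) : ∃ g ∈ P, g • t ≠ t := by
  have : Finite (ConjAct G) := hG.1
  exact Set.not_subset.mp <|
    P.not_le_stabilizer_of_dvd_card_orbit (hG.card_orbit_conjAct ht).symm.dvd

end Pertinent

theorem stmt_5 (G : Type*) [Group G] (hG : Pertinent G) (H : Subgroup G) [H.Normal]
    (m : ℕ) (hH : Nat.card H = 2 ^ m) : Even m := by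
  have : Finite G := hG.1
  have : Fact (Nat.Prime 3) := ⟨Nat.prime_three⟩
  obtain P : Sylow 3 (ConjAct G) := default
  have hmoves (h : H) (hh : orderOf h = 2) : ∃ g : P, g • h ≠ h := by
    obtain ⟨g, hgP, hg⟩ :=
      hG.exists_smul_ne_of_orderOf_eq_two P (t := h) (by rwa [Subgroup.orderOf_coe])
    exact ⟨⟨g, hgP⟩, fun hgh => hg (congrArg Subtype.val hgh)⟩
  have hmod : Nat.card H ≡ 1 [MOD 3] :=
    P.isPGroup'.card_modEq_one_of_forall_exists_smul_ne (IsPGroup.of_card hH) hmoves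
  exact Nat.even_of_two_pow_modEq_one (hH ▸ hmod)
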